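/- Sandwich inequality: under the hypotheses that the equality-constrained Bellman functions V^e_d are nonincreasing (so V^i_d = V^e_d), the price-decomposition functions V̲^P_d and the resource-decomposition functions V̄^R_d satisfy V̲^P_d ≤ V^e_d ≤ V̄^R_d for all d ∈ {0,…,D+1}. -/

import Mathlib

open scoped ENNReal BigOperators

/-- The standard scalar product on `ℝⁿ`. -/
noncomputable def dotp {n : ℕ} (p x : Fin n → ℝ) : ℝ := ∑ i, p i * x i

private lemma coe_ennreal_iInf' {ι : Sort*} (g : ι → ℝ≥0∞) :
    ((⨅ i, g i : ℝ≥0∞) : EReal) = ⨅ i, (g i : EReal) := by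
  apply le_antisymm
  · exact le_iInf fun i => EReal.coe_ennreal_le_coe_ennreal_iff.2 (iInf_le _ i)
  · have hb : (0 : EReal) ≤ ⨅ i, (g i : EReal) :=
      le_iInf fun i => EReal.coe_ennreal_nonneg _
    obtain ⟨c, hc⟩ : ∃ c : ℝ≥0∞, (c : EReal) = ⨅ i, (g i : EReal) := by
      lift (⨅ i, (g i : EReal)) to ℝ≥0∞ using hb with c hc
      exact ⟨c, rfl⟩
    rw [← hc, EReal.coe_ennreal_le_coe_ennreal_iff]
    exact le_iInf fun i => EReal.coe_ennreal_le_coe_ennreal_iff.1 (hc ▸ iInf_le _ i)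

private lemma aux_sub (a b : ℝ≥0∞) (c : ℝ) :
    ((a : EReal) + (c : EReal)) - ((c : EReal) - (b : EReal)) ≤ ((a + b : ℝ≥0∞) : EReal) := by
  rcases eq_or_ne a ⊤ with ha | ha
  · rw [ha, top_add b, EReal.coe_ennreal_top]; exact le_top
  rcases eq_or_ne b ⊤ with hb | hb
  · rw [hb, add_top a, EReal.coe_ennreal_top]; exact le_top
  · lift a to NNReal using ha with x
    lift b to NNReal using hb with y
    rw [← ENNReal.coe_add]
    have : ∀ z : NNReal, ((z : ℝ≥0∞) : EReal) = ((z : ℝ) : EReal) := fun z => rfl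
    rw [this, this, this]
    rw [← EReal.coe_add, ← EReal.coe_sub, ← EReal.coe_sub, EReal.coe_le_coe_iff]
    push_cast
    ring_nf
    exact le_refl _

/-- Sandwich inequality: if the equality-constrained Bellman value functions `Ve d`
are nonincreasing, then the price-decomposition value functions are lower bounds and
the resource-decomposition value functions are upper bounds:
`V̲ᴾ_d ≤ Vᵉ_d ≤ V̄ᴿ_d` for every stage `d`. -/
theorem sandwich_price_bellman_resource
    {n : ℕ} {U : ℕ → Type*} (D : ℕ)
    (L : (d : ℕ) → (Fin n → ℝ) → U d → ℝ≥0∞)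
    (f : (d : ℕ) → (Fin n → ℝ) → U d → (Fin n → ℝ))
    (K : (Fin n → ℝ) → ℝ≥0∞) (hK : Antitone K)
    (Ve Vi Vres : ℕ → (Fin n → ℝ) → ℝ≥0∞)
    (Vlow : ℕ → (Fin n → ℝ) → EReal)
    -- common final condition
    (hVeK : Ve (D + 1) = K) (hViK : Vi (D + 1) = K) (hVresK : Vres (D + 1) = K)
    (hVlowK : ∀ x, Vlow (D + 1) x = (K x : EReal))
    -- equality-constrained Bellman recursion
    (hVe : ∀ d ≤ D, ∀ x, Ve d x = ⨅ u : U d, L d x u + Ve (d + 1) (f d x u))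
    -- relaxed inequality-constrained Bellman recursion
    (hVi : ∀ d ≤ D, ∀ x,
      Vi d x = ⨅ u : U d, ⨅ x' ∈ {x' : Fin n → ℝ | x' ≤ f d x u},
        L d x u + Vi (d + 1) x')
    -- price (dual) recursion
    (hVlow : ∀ d ≤ D, ∀ x,
      Vlow d x = ⨆ p ∈ {p : Fin n → ℝ | p ≤ 0},
        ((⨅ u : U d, ((L d x u : EReal) + ((dotp p (f d x u) : ℝ) : EReal)))
          - (⨆ x' : Fin n → ℝ, ((dotp p x' : ℝ) : EReal) - Vlow (d + 1) x')))
    -- resource recursion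
    (hVres : ∀ d ≤ D, ∀ x,
      Vres d x = ⨅ r : Fin n → ℝ,
        ((⨅ u ∈ {u : U d | r ≤ f d x u}, L d x u) + Vres (d + 1) r))
    -- monotonicity of the equality-constrained Bellman value functions
    (hmono : ∀ d ≤ D + 1, Antitone (Ve d)) :
    ∀ d ≤ D + 1, ∀ x, Vlow d x ≤ (Ve d x : EReal) ∧ Ve d x ≤ Vres d x := by
  suffices H : ∀ j ≤ D + 1, ∀ x,
      Vlow (D + 1 - j) x ≤ (Ve (D + 1 - j) x : EReal) ∧
        Ve (D + 1 - j) x ≤ Vres (D + 1 - j) x by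
    intro d hd x
    have h := H (D + 1 - d) (by omega) x
    rwa [show D + 1 - (D + 1 - d) = d by omega] at h
  intro j
  induction j with
  | zero =>
    intro _ x
    simp only [Nat.sub_zero, hVeK, hVresK, hVlowK x]
    exact ⟨le_refl _, le_refl _⟩
  | succ j ih =>
    intro hj x
    have IH := ih (by omega)
    set d := D + 1 - (j + 1) with hdj
    have hd : d ≤ D := by omega
    have hd1 : d + 1 = D + 1 - j := by omega
    rw [← hd1] at IH
    constructor
    · -- price lower bound
      rw [hVlow d hd x]
      apply iSup₂_le
      intro p hp
      rw [hVe d hd x, coe_ennreal_iInf']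
      apply le_iInf
      intro u
      calc (⨅ u' : U d, ((L d x u' : EReal) + ((dotp p (f d x u') : ℝ) : EReal)))
            - (⨆ x' : Fin n → ℝ, ((dotp p x' : ℝ) : EReal) - Vlow (d + 1) x')
          ≤ ((L d x u : EReal) + ((dotp p (f d x u) : ℝ) : EReal))
            - (((dotp p (f d x u) : ℝ) : EReal) - (Ve (d + 1) (f d x u) : EReal)) := by
            apply EReal.sub_le_sub (iInf_le _ u)
            refine le_trans (EReal.sub_le_sub le_rfl (IH (f d x u)).1) ?_
            exact le_iSup (fun x' => ((dotp p x' : ℝ) : EReal) - Vlow (d + 1) x') (f d x u)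
        _ ≤ ((L d x u + Ve (d + 1) (f d x u) : ℝ≥0∞) : EReal) :=
            aux_sub (L d x u) (Ve (d + 1) (f d x u)) (dotp p (f d x u))
    · -- resource upper bound
      rw [hVres d hd x]
      apply le_iInf
      intro r
      simp only [Set.mem_setOf_eq]
      rw [ENNReal.iInf_add]
      apply le_iInf
      intro u
      rw [ENNReal.iInf_add]
      apply le_iInf
      intro hu
      rw [hVe d hd x]
      calc (⨅ u' : U d, L d x u' + Ve (d + 1) (f d x u'))
          ≤ L d x u + Ve (d + 1) (f d x u) := iInf_le _ u
        _ ≤ L d x u + Vres (d + 1) r := by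
            apply add_le_add le_rfl
            exact le_trans (hmono (d + 1) (by omega) hu) (IH r).2
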